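/- Let (A,≺,≻,α) be a Hom-Leibniz dendriform algebra over a field K, let (l≺, r≺, l≻, r≻, β, V) be a bimodule of it, and let (A,[·,·],α) with [x,y] = x≺y + x≻y be the associated Hom-Leibniz algebra. Then both (l≻, r≺, β, V) and (l≺ + l≻, r≺ + r≻, β, V) are bimodules of the Hom-Leibniz algebra (A,[·,·],α). -/
import Mathlib


/-- A Hom-Leibniz algebra structure. -/
def HomLeibniz {K A : Type*} [Field K] [AddCommGroup A] [Module K A]
    (br : A →ₗ[K] A →ₗ[K] A) (α : A →ₗ[K] A) : Prop :=
  ∀ x y z : A, br (α x) (br y z) = br (br x y) (α z) + br (α y) (br x z)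

/-- A bimodule `(l, r, β, V)` of a Hom-Leibniz algebra `(A, br, α)`. -/
def HomLeibnizBimodule {K A V : Type*} [Field K] [AddCommGroup A] [Module K A]
    [AddCommGroup V] [Module K V]
    (br : A →ₗ[K] A →ₗ[K] A) (α : A →ₗ[K] A)
    (l r : A →ₗ[K] V →ₗ[K] V) (β : V →ₗ[K] V) : Prop :=
  (∀ x y v, l (α x) (l y v) = l (br x y) (β v) + l (α y) (l x v)) ∧
  (∀ x y v, l (α x) (r y v) = r (α y) (l x v) + r (br x y) (β v)) ∧
  (∀ x y v, r (br x y) (β v) = r (α y) (r x v) + l (α x) (r y v)) ∧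
  (∀ x v, β (l x v) = l (α x) (β v)) ∧
  (∀ x v, β (r x v) = r (α x) (β v))

/-- A Hom-Leibniz dendriform algebra `(A, ≺, ≻, α)`, with `p = ≺` and `s = ≻`
and `[x,y] = x≺y + x≻y`. -/
def HomLeibnizDendriform {K A : Type*} [Field K] [AddCommGroup A] [Module K A]
    (p s : A →ₗ[K] A →ₗ[K] A) (α : A →ₗ[K] A) : Prop :=
  (∀ x y z : A, s (p x y + s x y) (α z) = s (α x) (s y z) - s (α y) (s x z)) ∧
  (∀ x y z : A, s (α x) (p y z) = p (s x y) (α z) + p (α y) (p x z + s x z)) ∧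
  (∀ x y z : A, p (α x) (p y z + s y z) = p (p x y) (α z) + s (α y) (p x z))

/-- A bimodule `(l≺, r≺, l≻, r≻, β, V)` of a Hom-Leibniz dendriform algebra
`(A, ≺, ≻, α)` (here `p = ≺`, `s = ≻`, `lp = l≺`, `rp = r≺`, `ls = l≻`,
`rs = r≻`). -/
def HomLeibnizDendriformBimodule {K A V : Type*} [Field K]
    [AddCommGroup A] [Module K A] [AddCommGroup V] [Module K V]
    (p s : A →ₗ[K] A →ₗ[K] A) (α : A →ₗ[K] A)
    (lp rp ls rs : A →ₗ[K] V →ₗ[K] V) (β : V →ₗ[K] V) : Prop :=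
  (∀ x y v, ls (p x y + s x y) (β v) = ls (α x) (ls y v) - ls (α y) (ls x v)) ∧
  (∀ x y v, rs (α y) (lp x v + ls x v) = ls (α x) (rs y v) - rs (s x y) (β v)) ∧
  (∀ x y v, rs (α y) (rp x v + rs x v) = rs (s x y) (β v) - ls (α x) (rs y v)) ∧
  (∀ x y v, ls (α x) (lp y v) = lp (s x y) (β v) + lp (α y) (lp x v + ls x v)) ∧
  (∀ x y v, ls (α x) (rp y v) = rp (α y) (ls x v) + rp (p x y + s x y) (β v)) ∧
  (∀ x y v, rs (p x y) (β v) = rp (α y) (rs x v) + lp (α x) (rp y v + rs y v)) ∧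
  (∀ x y v, lp (α x) (lp y v + ls y v) = lp (p x y) (β v) + ls (α y) (lp x v)) ∧
  (∀ x y v, lp (α x) (rp y v + rs y v) = rp (α y) (lp x v) + rs (p x y) (β v)) ∧
  (∀ x y v, rp (p x y + s x y) (β v) = rp (α y) (rp x v) + ls (α x) (rp y v)) ∧
  (∀ x v, β (lp x v) = lp (α x) (β v)) ∧
  (∀ x v, β (rp x v) = rp (α x) (β v)) ∧
  (∀ x v, β (ls x v) = ls (α x) (β v)) ∧
  (∀ x v, β (rs x v) = rs (α x) (β v))

/-- if `(l≺, r≺, l≻, r≻, β, V)` is a bimodule of a Hom-Leibniz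
dendriform algebra `(A, ≺, ≻, α)`, then `(l≻, r≺, β, V)` and
`(l≺+l≻, r≺+r≻, β, V)` are bimodules of the associated Hom-Leibniz algebra
`(A, [·,·] = ≺+≻, α)`. -/
theorem homLeibniz_bimodules_of_dendriform_bimodule
    {K A V : Type*} [Field K] [AddCommGroup A] [Module K A]
    [AddCommGroup V] [Module K V]
    (p s : A →ₗ[K] A →ₗ[K] A) (α : A →ₗ[K] A)
    (lp rp ls rs : A →ₗ[K] V →ₗ[K] V) (β : V →ₗ[K] V)
    (hA : HomLeibnizDendriform p s α)
    (hV : HomLeibnizDendriformBimodule p s α lp rp ls rs β) :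
    HomLeibnizBimodule (p + s) α ls rp β ∧
    HomLeibnizBimodule (p + s) α (lp + ls) (rp + rs) β := by

  obtain ⟨h1, h2, h3, h4, h5, h6, h7, h8, h9, h10, h11, h12, h13⟩ := hV
  refine ⟨⟨?_, ?_, ?_, ?_, ?_⟩, ?_, ?_, ?_, ?_, ?_⟩
  · intro x y v
    have e := h1 x y v
    simp only [LinearMap.add_apply, map_add] at *
    linear_combination (norm := abel) -e
  · intro x y v
    have e := h5 x y v
    simp only [LinearMap.add_apply, map_add] at *
    linear_combination (norm := abel) e
  · intro x y v
    have e := h9 x y v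
    simp only [LinearMap.add_apply, map_add] at *
    linear_combination (norm := abel) e
  · exact h12
  · exact h11
  · intro x y v
    have e1 := h1 x y v
    have e4 := h4 x y v
    have e7 := h7 x y v
    simp only [LinearMap.add_apply, map_add] at *
    linear_combination (norm := abel) -e1 + e4 + e7
  · intro x y v
    have e2 := h2 x y v
    have e5 := h5 x y v
    have e8 := h8 x y v
    simp only [LinearMap.add_apply, map_add] at *
    linear_combination (norm := abel) -e2 + e5 + e8
  · intro x y v
    have e3 := h3 x y v
    have e6 := h6 x y v
    have e9 := h9 x y v
    simp only [LinearMap.add_apply, map_add] at *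
    linear_combination (norm := abel) -e3 + e6 + e9
  · intro x v
    simp only [LinearMap.add_apply, map_add, h10, h12]
  · intro x v
    simp only [LinearMap.add_apply, map_add, h11, h13]
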